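/- Let V be a normed space, λ₁, λ₂ < 0, B ≥ 0, and suppose differentiable functions a, b : ℝ≥0 → ℝ≥0 satisfy a(t) ≤ a(0)e^{λ₁ t} and the upper Dini derivative bound D⁺b(t) ≤ B·a(t) + λ₂·b(t) for all t. Then b(t) ≤ b(0)e^{λ₂ t} + (B·a(0)/(λ₁ − λ₂))·(e^{λ₁ t} − e^{λ₂ t}) for all t ≥ 0, assuming λ₁ ≠ λ₂. In particular b(t) → 0 as t → ∞. -/

import Mathlib

/-!
Integrating factor: since `b' ≤ B a(0) e^{λ₁ t} + λ₂ b`, the function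
`b(t) e^{-λ₂ t} - (B a(0)/(λ₁ - λ₂)) e^{(λ₁ - λ₂) t}` has nonpositive derivative, so it is bounded
by its value at `0`; multiplying back by `e^{λ₂ t}` gives the estimate. The bound is a combination
of decaying exponentials, and `b ≥ 0` squeezes `b` to `0`.
-/

open Filter Real Set Topology

lemma tendsto_exp_mul_atTop_nhds_zero {c : ℝ} (hc : c < 0) :
    Tendsto (fun t => exp (c * t)) atTop (𝓝 0) :=
  tendsto_exp_atBot.comp (tendsto_id.const_mul_atTop_of_neg hc)

section LinearComparison

variable {f f' : ℝ → ℝ} {c μ K : ℝ}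

lemma antitoneOn_integratingFactor_of_deriv_le (hμc : μ ≠ c)
    (hf : ∀ t, 0 ≤ t → HasDerivAt f (f' t) t)
    (hf' : ∀ t, 0 ≤ t → f' t ≤ K * exp (μ * t) + c * f t) :
    AntitoneOn (fun t => f t * exp (-c * t) - K / (μ - c) * exp ((μ - c) * t)) (Ici 0) := by
  have hderiv : ∀ t, 0 ≤ t → HasDerivAt
      (fun t => f t * exp (-c * t) - K / (μ - c) * exp ((μ - c) * t))
      ((f' t - c * f t) * exp (-c * t) - K * exp ((μ - c) * t)) t := by
    intro t ht
    have hexp : ∀ r : ℝ, HasDerivAt (fun t => exp (r * t)) (r * exp (r * t)) t := fun r => by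
      simpa [mul_comm] using ((hasDerivAt_id t).const_mul r).exp
    refine (((hf t ht).mul (hexp (-c))).sub ((hexp (μ - c)).const_mul (K / (μ - c)))).congr_deriv ?_
    rw [← mul_assoc (K / (μ - c)), div_mul_cancel₀ K (sub_ne_zero.mpr hμc)]
    ring
  have hderiv_nonpos : ∀ t, 0 ≤ t →
      (f' t - c * f t) * exp (-c * t) - K * exp ((μ - c) * t) ≤ 0 := by
    intro t ht
    have hsplit : exp ((μ - c) * t) = exp (μ * t) * exp (-c * t) := by
      rw [← exp_add]; ring_nf
    rw [hsplit, sub_nonpos, ← mul_assoc]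
    exact mul_le_mul_of_nonneg_right (by linarith [hf' t ht]) (exp_pos _).le
  exact antitoneOn_of_hasDerivWithinAt_nonpos (convex_Ici 0)
    (fun t ht => (hderiv t ht).continuousAt.continuousWithinAt)
    (fun t ht => (hderiv t (interior_subset ht)).hasDerivWithinAt)
    (fun t ht => hderiv_nonpos t (interior_subset ht))

lemma le_of_deriv_le_exp_add_mul (hμc : μ ≠ c)
    (hf : ∀ t, 0 ≤ t → HasDerivAt f (f' t) t)
    (hf' : ∀ t, 0 ≤ t → f' t ≤ K * exp (μ * t) + c * f t) {t : ℝ} (ht : 0 ≤ t) :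
    f t ≤ f 0 * exp (c * t) + K / (μ - c) * (exp (μ * t) - exp (c * t)) := by
  have hanti := antitoneOn_integratingFactor_of_deriv_le hμc hf hf' self_mem_Ici ht ht
  simp only [mul_zero, exp_zero, mul_one] at hanti
  have hcancel : exp (-c * t) * exp (c * t) = 1 := by rw [← exp_add]; simp
  have hshift : exp ((μ - c) * t) * exp (c * t) = exp (μ * t) := by rw [← exp_add]; ring_nf
  calc f t = f t * exp (-c * t) * exp (c * t) := by rw [mul_assoc, hcancel, mul_one]
    _ ≤ (f 0 - K / (μ - c) + K / (μ - c) * exp ((μ - c) * t)) * exp (c * t) :=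
        mul_le_mul_of_nonneg_right (by linarith) (exp_pos _).le
    _ = f 0 * exp (c * t) + K / (μ - c) * (exp (μ * t) - exp (c * t)) := by
        rw [add_mul, mul_assoc, hshift]; ring

end LinearComparison

theorem feedforward_comparison_general (a b b' : ℝ → ℝ) (lam₁ lam₂ B : ℝ)
    (hlam₁ : lam₁ < 0) (hlam₂ : lam₂ < 0) (hB : 0 ≤ B) (hne : lam₁ ≠ lam₂)
    (hb0 : ∀ t : ℝ, 0 ≤ t → 0 ≤ b t)
    (ha : ∀ t : ℝ, 0 ≤ t → a t ≤ a 0 * Real.exp (lam₁ * t))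
    (hb : ∀ t : ℝ, 0 ≤ t → HasDerivAt b (b' t) t)
    (hb' : ∀ t : ℝ, 0 ≤ t → b' t ≤ B * a t + lam₂ * b t) :
    (∀ t : ℝ, 0 ≤ t →
      b t ≤ b 0 * Real.exp (lam₂ * t) +
        (B * a 0 / (lam₁ - lam₂)) * (Real.exp (lam₁ * t) - Real.exp (lam₂ * t))) ∧
    Tendsto b atTop (nhds 0) := by
  have hforced : ∀ t, 0 ≤ t → b' t ≤ B * a 0 * exp (lam₁ * t) + lam₂ * b t := fun t ht => by
    have := mul_le_mul_of_nonneg_left (ha t ht) hB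
    linarith [hb' t ht]
  have hbound := fun t (ht : 0 ≤ t) => le_of_deriv_le_exp_add_mul hne hb hforced ht
  refine ⟨hbound, ?_⟩
  have hdecay₁ := tendsto_exp_mul_atTop_nhds_zero hlam₁
  have hdecay₂ := tendsto_exp_mul_atTop_nhds_zero hlam₂
  have hbound_tendsto := (hdecay₂.const_mul (b 0)).add ((hdecay₁.sub hdecay₂).const_mul
    (B * a 0 / (lam₁ - lam₂)))
  simp only [mul_zero, sub_zero, add_zero] at hbound_tendsto
  refine tendsto_of_tendsto_of_tendsto_of_le_of_le' tendsto_const_nhds hbound_tendsto ?_ ?_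
  · filter_upwards [eventually_ge_atTop 0] with t ht using hb0 t ht
  · filter_upwards [eventually_ge_atTop 0] with t ht using hbound t ht

/-- Comparison lemma for feedforward (cascade) combinations: the driven
perturbation decays whenever the driving perturbation decays. -/
theorem feedforward_comparison (a b b' : ℝ → ℝ) (lam₁ lam₂ B : ℝ)
    (hlam₁ : lam₁ < 0) (hlam₂ : lam₂ < 0) (hB : 0 ≤ B) (hne : lam₁ ≠ lam₂)
    (ha0 : ∀ t : ℝ, 0 ≤ t → 0 ≤ a t) (hb0 : ∀ t : ℝ, 0 ≤ t → 0 ≤ b t)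
    (ha : ∀ t : ℝ, 0 ≤ t → a t ≤ a 0 * Real.exp (lam₁ * t))
    (hb : ∀ t : ℝ, 0 ≤ t → HasDerivAt b (b' t) t)
    (hb' : ∀ t : ℝ, 0 ≤ t → b' t ≤ B * a t + lam₂ * b t) :
    (∀ t : ℝ, 0 ≤ t →
      b t ≤ b 0 * Real.exp (lam₂ * t) +
        (B * a 0 / (lam₁ - lam₂)) * (Real.exp (lam₁ * t) - Real.exp (lam₂ * t))) ∧
    Tendsto b atTop (nhds 0) :=
  feedforward_comparison_general a b b' lam₁ lam₂ B hlam₁ hlam₂ hB hne hb0 ha hb hb'
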